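/- Conversely, given a commutative ring R, a commutative R-algebra A, an A-module M, and an R-linear connection ∇ : M → M ⊗_A Ω_{A/R} satisfying the Leibniz rule, the map ε : P ⊗_{p_2,A} M → M ⊗_{A,p_1} P determined by ε(1 ⊗ m) = m ⊗ 1 + ∇(m) (under the identification of the kernel of P → A with Ω_{A/R}) is a well-defined P-linear isomorphism reducing to the identity modulo I/I². These two constructions are mutually inverse, so the category of A-modules with connection is equivalent to the category of A-modules with 1-stratification. -/

import Mathlib

/-!
In `P`, the image of `Ω[A⁄R] = I/I²` squares to zero and `p₂ a = p₁ a + d a`. Hence a map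
`θ : M → P ⊗_{p₁} M` with `θ (a • m) = p₂ a • θ m` extends `P`-linearly to `P ⊗_{p₂} M`, and for
`θ m = 1 ⊗ m + ∇ m` this semilinearity is exactly the Leibniz rule. The map built in the same way
from `m ↦ 1 ⊗ m - ∇ m` is inverse to it, because `Ω` annihilates `Ω` inside `P`. Since the
`1 ⊗ m` generate `P ⊗_{p₂} M` over `P`, a stratification is determined by these values; conversely
`∇` is read off from `ε` through the retraction `P → Ω[A⁄R]` induced by the universal derivation,
which vanishes on `I²`. The same generation argument shows that an `A`-linear map commutes with
the stratifications iff it commutes with the connections.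
-/

open TensorProduct

set_option maxHeartbeats 2000000
set_option synthInstance.maxHeartbeats 1000000

noncomputable section

variable (R A : Type u) [CommRing R] [CommRing A] [Algebra R A]

/-- The first infinitesimal neighbourhood `P = (A ⊗[R] A)/I²` of the diagonal, where `I`
is the kernel of the multiplication map `A ⊗[R] A → A`. -/
abbrev InfNbhd := (A ⊗[R] A) ⧸ (KaehlerDifferential.ideal R A ^ 2)

/-- The second `A`-algebra structure map `p₂ : A → P` (the first one, `p₁`, is the
canonical `algebraMap A P` through the left tensor factor). -/
def p2 : A →+* InfNbhd R A :=
  (Ideal.Quotient.mk (KaehlerDifferential.ideal R A ^ 2)).comp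
    (Algebra.TensorProduct.includeRight.toRingHom)

/-- Type synonym for `P` viewed as an `A`-algebra via `p₂`. -/
def InfR := InfNbhd R A

instance : CommRing (InfR R A) := inferInstanceAs (CommRing (InfNbhd R A))
instance : Algebra A (InfR R A) := (p2 R A).toAlgebra
instance : Module (InfNbhd R A) (InfR R A) :=
  inferInstanceAs (Module (InfNbhd R A) (InfNbhd R A))
instance : SMulCommClass A (InfNbhd R A) (InfR R A) :=
  ⟨fun a p x => mul_left_comm (p2 R A a) p x⟩

/-- The inclusion `Ω[A⁄R] = I/I² → P`. -/
def jmap : Ω[A⁄R] →ₗ[A] InfNbhd R A where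
  toFun w := (KaehlerDifferential.ideal R A).cotangentToQuotientSquare w
  map_add' x y := map_add _ x y
  map_smul' a w := by
    simp only [RingHom.id_apply]
    rw [← algebraMap_smul (A ⊗[R] A) a w]
    exact (map_smul (KaehlerDifferential.ideal R A).cotangentToQuotientSquare _ _).trans (algebraMap_smul _ _ _)

variable (M : Type u) [AddCommGroup M] [Module A M]

/-- The canonical embedding `M ⊗[A] Ω[A⁄R] → P ⊗[A] M` induced by `Ω = I/I² ⊆ P`
(together with the symmetry of the tensor product). -/
def kappa : M ⊗[A] Ω[A⁄R] →ₗ[A] InfNbhd R A ⊗[A] M :=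
  (LinearMap.rTensor M (jmap R A)).comp (TensorProduct.comm A M (Ω[A⁄R])).toLinearMap

namespace TensorProduct

section Generator

variable {A S X M N : Type*} [CommSemiring A] [Semiring S] [AddCommMonoid X] [Module A X]
  [Module S X] [SMulCommClass A S X] [AddCommMonoid M] [Module A M] [AddCommMonoid N]
  [Module S N]

@[elab_as_elim]
theorem induction_on_smul_generator_tmul {x₀ : X} (hx₀ : ∀ x : X, ∃ s : S, s • x₀ = x)
    {motive : X ⊗[A] M → Prop} (zero : motive 0)
    (smul_tmul : ∀ (s : S) (m : M), motive (s • x₀ ⊗ₜ[A] m))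
    (add : ∀ t t', motive t → motive t' → motive (t + t')) (t : X ⊗[A] M) : motive t := by
  induction t with
  | zero => exact zero
  | tmul x m =>
      obtain ⟨s, rfl⟩ := hx₀ x
      exact smul_tmul s m
  | add t t' ht ht' => exact add t t' ht ht'

theorem linearMap_ext_of_generator {x₀ : X} (hx₀ : ∀ x : X, ∃ s : S, s • x₀ = x)
    {f g : X ⊗[A] M →ₗ[S] N} (h : ∀ m, f (x₀ ⊗ₜ m) = g (x₀ ⊗ₜ m)) : f = g := by
  ext t
  refine induction_on_smul_generator_tmul hx₀ ?_ (fun s m => ?_) (fun t t' ht ht' => ?_) t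
  · rw [map_zero, map_zero]
  · rw [map_smul, map_smul, h]
  · rw [map_add, map_add, ht, ht']

def liftOfSMulLeft (f : X →+ M →+ N) (hA : ∀ (a : A) x m, f (a • x) m = f x (a • m))
    (hS : ∀ (s : S) x m, f (s • x) m = s • f x m) : X ⊗[A] M →ₗ[S] N where
  toFun := liftAddHom f hA
  map_add' := map_add _
  map_smul' s t := by
    induction t with
    | zero => rw [smul_zero, map_zero, smul_zero]
    | tmul x m => exact hS s x m
    | add t t' ht ht' => rw [smul_add, map_add, map_add, ht, ht', smul_add]

theorem _root_.LinearMap.lTensor_smul_of_smulCommClass {M' : Type*} [AddCommMonoid M']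
    [Module A M'] (f : M →ₗ[A] M') (s : S) (t : X ⊗[A] M) :
    f.lTensor X (s • t) = s • f.lTensor X t := by
  induction t with
  | zero => rw [smul_zero, map_zero, smul_zero]
  | tmul x m => rfl
  | add t t' ht ht' => rw [smul_add, map_add, map_add, ht, ht', smul_add]

end Generator

end TensorProduct

theorem Derivation.tensorProductTo_eq_zero_of_mem_ideal_sq {R S M : Type*} [CommRing R]
    [CommRing S] [Algebra R S] [AddCommGroup M] [Module R M] [Module S M] [IsScalarTower R S M]
    (D : Derivation R S M) {x : S ⊗[R] S} (hx : x ∈ KaehlerDifferential.ideal R S ^ 2) :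
    D.tensorProductTo x = 0 := by
  rw [pow_two] at hx
  refine Submodule.mul_induction_on hx (fun u hu v hv => ?_) (fun y z hy hz => ?_)
  · rw [D.tensorProductTo_mul, RingHom.mem_ker.mp hu, RingHom.mem_ker.mp hv, zero_smul,
      zero_smul, add_zero]
  · rw [map_add, hy, hz, add_zero]

namespace InfNbhd

variable {R A M}

theorem p2_eq_algebraMap_add_jmap (a : A) :
    p2 R A a = algebraMap A (InfNbhd R A) a + jmap R A (KaehlerDifferential.D R A a) := by
  change Ideal.Quotient.mk _ ((1 : A) ⊗ₜ[R] a) =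
    Ideal.Quotient.mk _ (a ⊗ₜ[R] (1 : A)) + Ideal.Quotient.mk _ ((1 : A) ⊗ₜ[R] a - a ⊗ₜ[R] 1)
  rw [← map_add, add_sub_cancel]

theorem jmap_mul_jmap (w w' : Ω[A⁄R]) : jmap R A w * jmap R A w' = 0 := by
  obtain ⟨⟨x, hx⟩, rfl⟩ := Ideal.toCotangent_surjective _ w
  obtain ⟨⟨y, hy⟩, rfl⟩ := Ideal.toCotangent_surjective _ w'
  change Ideal.Quotient.mk _ x * Ideal.Quotient.mk _ y = 0
  rw [← map_mul, Ideal.Quotient.eq_zero_iff_mem, pow_two]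
  exact Ideal.mul_mem_mul hx hy

theorem p2_mul_jmap (a : A) (w : Ω[A⁄R]) :
    p2 R A a * jmap R A w = algebraMap A (InfNbhd R A) a * jmap R A w := by
  rw [p2_eq_algebraMap_add_jmap, add_mul, jmap_mul_jmap, add_zero]

variable (R A) in
def toKaehler : InfNbhd R A →ₗ[A] Ω[A⁄R] :=
  (Submodule.liftQ ((KaehlerDifferential.ideal R A ^ 2).restrictScalars A)
      (KaehlerDifferential.D R A).tensorProductTo fun _ hx =>
        (KaehlerDifferential.D R A).tensorProductTo_eq_zero_of_mem_ideal_sq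
          ((Submodule.restrictScalars_mem _ _ _).mp hx)) ∘ₗ
    (Submodule.Quotient.restrictScalarsEquiv A (KaehlerDifferential.ideal R A ^ 2)).symm.toLinearMap

theorem toKaehler_jmap (w : Ω[A⁄R]) : toKaehler R A (jmap R A w) = w := by
  obtain ⟨x, rfl⟩ := Ideal.toCotangent_surjective _ w
  exact KaehlerDifferential.D_tensorProductTo x

variable (R A) in
def jmapR : Ω[A⁄R] →ₗ[A] InfR R A where
  toFun := jmap R A
  map_add' := map_add _
  map_smul' a w := by
    rw [map_smul, Algebra.smul_def, ← p2_mul_jmap]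
    rfl

variable (R A M) in
def kappaR : M ⊗[A] Ω[A⁄R] →ₗ[A] InfR R A ⊗[A] M :=
  (LinearMap.rTensor M (jmapR R A)).comp (TensorProduct.comm A M Ω[A⁄R]).toLinearMap

theorem exists_smul_one_eq (x : InfNbhd R A) : ∃ p : InfNbhd R A, p • 1 = x :=
  ⟨x, mul_one x⟩

theorem exists_smul_one_eq_infR (x : InfR R A) : ∃ p : InfNbhd R A, p • (1 : InfR R A) = x :=
  ⟨x, mul_one x⟩

section Target

theorem kappa_tmul (m : M) (w : Ω[A⁄R]) : kappa R A M (m ⊗ₜ w) = jmap R A w ⊗ₜ m :=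
  rfl

theorem jmap_smul_one_tmul (w : Ω[A⁄R]) (m : M) :
    jmap R A w • ((1 : InfNbhd R A) ⊗ₜ[A] m) = kappa R A M (m ⊗ₜ w) := by
  rw [smul_tmul', smul_eq_mul, mul_one, kappa_tmul]

theorem jmap_smul_kappa (w : Ω[A⁄R]) (t : M ⊗[A] Ω[A⁄R]) : jmap R A w • kappa R A M t = 0 := by
  induction t with
  | zero => rw [map_zero, smul_zero]
  | tmul m w' => rw [kappa_tmul, smul_tmul', smul_eq_mul, jmap_mul_jmap, zero_tmul]
  | add t t' ht ht' => rw [map_add, smul_add, ht, ht', add_zero]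

theorem p2_smul_kappa (a : A) (t : M ⊗[A] Ω[A⁄R]) :
    p2 R A a • kappa R A M t = kappa R A M (a • t) := by
  rw [p2_eq_algebraMap_add_jmap, add_smul, jmap_smul_kappa, add_zero, algebraMap_smul, map_smul]

theorem p2_smul_one_tmul (a : A) (m : M) :
    p2 R A a • ((1 : InfNbhd R A) ⊗ₜ[A] m) =
      (1 : InfNbhd R A) ⊗ₜ[A] (a • m) + kappa R A M (m ⊗ₜ KaehlerDifferential.D R A a) := by
  rw [p2_eq_algebraMap_add_jmap, add_smul, jmap_smul_one_tmul, algebraMap_smul, tmul_smul]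

end Target

section Source

theorem kappaR_tmul (m : M) (w : Ω[A⁄R]) : kappaR R A M (m ⊗ₜ w) = jmapR R A w ⊗ₜ m :=
  rfl

theorem smul_eq_p2_smul (a : A) (t : InfR R A ⊗[A] M) : a • t = p2 R A a • t := by
  induction t with
  | zero => rw [smul_zero, smul_zero]
  | tmul q m => rfl
  | add t t' ht ht' => rw [smul_add, smul_add, ht, ht']

theorem jmap_smul_one_tmul_infR (w : Ω[A⁄R]) (m : M) :
    jmap R A w • ((1 : InfR R A) ⊗ₜ[A] m) = kappaR R A M (m ⊗ₜ w) := by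
  rw [smul_tmul', kappaR_tmul]
  exact congrArg (fun q : InfR R A => q ⊗ₜ[A] m) (mul_one (jmap R A w))

theorem jmap_smul_kappaR (w : Ω[A⁄R]) (t : M ⊗[A] Ω[A⁄R]) : jmap R A w • kappaR R A M t = 0 := by
  induction t with
  | zero => rw [map_zero, smul_zero]
  | tmul m w' =>
      rw [kappaR_tmul, smul_tmul']
      exact (congrArg (fun q : InfR R A => q ⊗ₜ[A] m) (jmap_mul_jmap w w')).trans (zero_tmul _ _)
  | add t t' ht ht' => rw [map_add, smul_add, ht, ht', add_zero]

theorem algebraMap_smul_kappaR (a : A) (t : M ⊗[A] Ω[A⁄R]) :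
    algebraMap A (InfNbhd R A) a • kappaR R A M t = kappaR R A M (a • t) := by
  have h := add_smul (algebraMap A (InfNbhd R A) a) (jmap R A (KaehlerDifferential.D R A a))
    (kappaR R A M t)
  rw [← p2_eq_algebraMap_add_jmap, jmap_smul_kappaR, add_zero, ← smul_eq_p2_smul, ← map_smul] at h
  exact h.symm

theorem algebraMap_smul_one_tmul_infR (a : A) (m : M) :
    algebraMap A (InfNbhd R A) a • ((1 : InfR R A) ⊗ₜ[A] m) =
      (1 : InfR R A) ⊗ₜ[A] (a • m) - kappaR R A M (m ⊗ₜ KaehlerDifferential.D R A a) := by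
  have h := add_smul (algebraMap A (InfNbhd R A) a) (jmap R A (KaehlerDifferential.D R A a))
    ((1 : InfR R A) ⊗ₜ[A] m)
  rw [← p2_eq_algebraMap_add_jmap, jmap_smul_one_tmul_infR, ← smul_eq_p2_smul, ← tmul_smul] at h
  exact eq_sub_of_add_eq h.symm

end Source

section Taylor

variable (D : M →+ M ⊗[A] Ω[A⁄R])

def taylor : M →+ InfNbhd R A ⊗[A] M :=
  (TensorProduct.mk A (InfNbhd R A) M 1).toAddMonoidHom + (kappa R A M).toAddMonoidHom.comp D

theorem taylor_apply (m : M) : taylor D m = (1 : InfNbhd R A) ⊗ₜ m + kappa R A M (D m) :=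
  rfl

def taylorR : M →+ InfR R A ⊗[A] M :=
  (TensorProduct.mk A (InfR R A) M 1).toAddMonoidHom - (kappaR R A M).toAddMonoidHom.comp D

theorem taylorR_apply (m : M) : taylorR D m = (1 : InfR R A) ⊗ₜ m - kappaR R A M (D m) :=
  rfl

variable {D}
variable (hD : ∀ (a : A) (m : M), D (a • m) = a • D m + m ⊗ₜ[A] KaehlerDifferential.D R A a)
include hD

theorem taylor_smul (a : A) (m : M) : taylor D (a • m) = p2 R A a • taylor D m := by
  rw [taylor_apply, taylor_apply, hD, map_add, smul_add, p2_smul_one_tmul, p2_smul_kappa]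
  abel

theorem taylorR_smul (a : A) (m : M) :
    taylorR D (a • m) = algebraMap A (InfNbhd R A) a • taylorR D m := by
  rw [taylorR_apply, taylorR_apply, hD, map_add,
    smul_sub (algebraMap A (InfNbhd R A) a) ((1 : InfR R A) ⊗ₜ[A] m) (kappaR R A M (D m)),
    algebraMap_smul_one_tmul_infR, algebraMap_smul_kappaR]
  abel

def stratHom : InfR R A ⊗[A] M →ₗ[InfNbhd R A] InfNbhd R A ⊗[A] M :=
  TensorProduct.liftOfSMulLeft
    ((smulAddHom (InfNbhd R A) _).compl₂ (taylor D) : InfR R A →+ M →+ InfNbhd R A ⊗[A] M)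
    -- `InfR R A` is `P` itself, so `q` may be used as a scalar
    (fun a (q : InfNbhd R A) m => by
      change (p2 R A a * q) • taylor D m = q • taylor D (a • m)
      rw [taylor_smul hD, smul_smul, mul_comm])
    (fun p (q : InfNbhd R A) m => mul_smul p q (taylor D m))

def stratInvHom : InfNbhd R A ⊗[A] M →ₗ[InfNbhd R A] InfR R A ⊗[A] M :=
  TensorProduct.liftOfSMulLeft ((smulAddHom (InfNbhd R A) _).compl₂ (taylorR D))
    (fun a q m => by
      change (a • q) • taylorR D m = q • taylorR D (a • m)
      rw [taylorR_smul hD, smul_smul, Algebra.smul_def, mul_comm])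
    (fun p q m => mul_smul p q (taylorR D m))

theorem stratHom_one_tmul (m : M) : stratHom hD ((1 : InfR R A) ⊗ₜ m) = taylor D m :=
  one_smul (InfNbhd R A) (taylor D m)

theorem stratInvHom_one_tmul (m : M) : stratInvHom hD ((1 : InfNbhd R A) ⊗ₜ m) = taylorR D m :=
  one_smul (InfNbhd R A) (taylorR D m)

theorem stratHom_kappaR (t : M ⊗[A] Ω[A⁄R]) : stratHom hD (kappaR R A M t) = kappa R A M t := by
  induction t with
  | zero => rw [map_zero, map_zero, map_zero]
  | tmul m w =>
      change jmap R A w • taylor D m = _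
      rw [taylor_apply, smul_add, jmap_smul_one_tmul, jmap_smul_kappa, add_zero]
  | add t t' ht ht' => rw [map_add, map_add, map_add, ht, ht']

theorem stratInvHom_kappa (t : M ⊗[A] Ω[A⁄R]) :
    stratInvHom hD (kappa R A M t) = kappaR R A M t := by
  induction t with
  | zero => rw [map_zero, map_zero, map_zero]
  | tmul m w =>
      change jmap R A w • taylorR D m = _
      rw [taylorR_apply,
        smul_sub (jmap R A w) ((1 : InfR R A) ⊗ₜ[A] m) (kappaR R A M (D m)),
        jmap_smul_one_tmul_infR, jmap_smul_kappaR, sub_zero]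
  | add t t' ht ht' => rw [map_add, map_add, map_add, ht, ht']

def stratOfConnection : InfR R A ⊗[A] M ≃ₗ[InfNbhd R A] InfNbhd R A ⊗[A] M :=
  .ofLinearMap (stratHom hD) (stratInvHom hD)
    (TensorProduct.linearMap_ext_of_generator exists_smul_one_eq fun m => by
      rw [LinearMap.comp_apply, stratInvHom_one_tmul, taylorR_apply, map_sub, stratHom_one_tmul,
        stratHom_kappaR, taylor_apply, add_sub_cancel_right, LinearMap.id_apply])
    (TensorProduct.linearMap_ext_of_generator exists_smul_one_eq_infR fun m => by
      rw [LinearMap.comp_apply, stratHom_one_tmul, taylor_apply, map_add, stratInvHom_one_tmul,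
        stratInvHom_kappa, taylorR_apply, sub_add_cancel, LinearMap.id_apply])

theorem stratOfConnection_one_tmul (m : M) :
    stratOfConnection hD ((1 : InfR R A) ⊗ₜ m) = taylor D m :=
  stratHom_one_tmul hD m

theorem eq_stratOfConnection {ε : InfR R A ⊗[A] M ≃ₗ[InfNbhd R A] InfNbhd R A ⊗[A] M}
    (hε : ∀ m : M, ε ((1 : InfR R A) ⊗ₜ m) = taylor D m) : ε = stratOfConnection hD :=
  LinearEquiv.toLinearMap_injective <|
    TensorProduct.linearMap_ext_of_generator exists_smul_one_eq_infR fun m => by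
      rw [LinearEquiv.coe_coe, LinearEquiv.coe_coe, hε, stratOfConnection_one_tmul]

end Taylor

variable (R A M) in
def kappaRetraction : InfNbhd R A ⊗[A] M →ₗ[A] M ⊗[A] Ω[A⁄R] :=
  (TensorProduct.comm A Ω[A⁄R] M).toLinearMap ∘ₗ (toKaehler R A).rTensor M

theorem kappaRetraction_kappa (t : M ⊗[A] Ω[A⁄R]) :
    kappaRetraction R A M (kappa R A M t) = t := by
  induction t with
  | zero => rw [map_zero, map_zero]
  | tmul m w =>
      change TensorProduct.comm A Ω[A⁄R] M (toKaehler R A (jmap R A w) ⊗ₜ m) = m ⊗ₜ w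
      rw [toKaehler_jmap, TensorProduct.comm_tmul]
  | add t t' ht ht' => rw [map_add, map_add, ht, ht']

theorem kappa_injective : Function.Injective (kappa R A M) :=
  Function.LeftInverse.injective kappaRetraction_kappa

theorem eq_of_taylor_apply_eq {D D' : M →+ M ⊗[A] Ω[A⁄R]} {m : M}
    (h : taylor D m = taylor D' m) : D m = D' m :=
  kappa_injective (add_left_cancel h)

theorem lTensor_kappa {N : Type u} [AddCommGroup N] [Module A N] (f : M →ₗ[A] N)
    (t : M ⊗[A] Ω[A⁄R]) :
    f.lTensor (InfNbhd R A) (kappa R A M t) = kappa R A N (f.rTensor Ω[A⁄R] t) := by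
  induction t with
  | zero => simp only [map_zero]
  | tmul m w => rfl
  | add t t' ht ht' => simp only [map_add, ht, ht']

theorem lTensor_taylor {N : Type u} [AddCommGroup N] [Module A N] (D : M →+ M ⊗[A] Ω[A⁄R])
    (f : M →ₗ[A] N) (m : M) :
    f.lTensor (InfNbhd R A) (taylor D m) =
      (1 : InfNbhd R A) ⊗ₜ f m + kappa R A N (f.rTensor Ω[A⁄R] (D m)) := by
  rw [taylor_apply, map_add, LinearMap.lTensor_tmul, lTensor_kappa]

section Connection

variable (ε : InfR R A ⊗[A] M ≃ₗ[InfNbhd R A] InfNbhd R A ⊗[A] M)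

def connectionOfStrat : M →+ M ⊗[A] Ω[A⁄R] :=
  (kappaRetraction R A M).toAddMonoidHom.comp
    (ε.toAddMonoidHom.comp (TensorProduct.mk A (InfR R A) M 1).toAddMonoidHom -
      (TensorProduct.mk A (InfNbhd R A) M 1).toAddMonoidHom)

theorem taylor_connectionOfStrat
    (hε : ∀ m : M, ε ((1 : InfR R A) ⊗ₜ m) - (1 : InfNbhd R A) ⊗ₜ m ∈
      LinearMap.range (kappa R A M)) (m : M) :
    taylor (connectionOfStrat ε) m = ε ((1 : InfR R A) ⊗ₜ m) := by
  obtain ⟨t, ht⟩ := hε m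
  change (1 : InfNbhd R A) ⊗ₜ m +
    kappa R A M (kappaRetraction R A M (ε ((1 : InfR R A) ⊗ₜ m) - (1 : InfNbhd R A) ⊗ₜ m)) = _
  rw [← ht, kappaRetraction_kappa, ht, add_sub_cancel]

theorem leibniz_of_strat {D : M →+ M ⊗[A] Ω[A⁄R]}
    (hε : ∀ m : M, ε ((1 : InfR R A) ⊗ₜ m) = taylor D m) (a : A) (m : M) :
    D (a • m) = a • D m + m ⊗ₜ KaehlerDifferential.D R A a := by
  have h := hε (a • m)
  rw [tmul_smul, smul_eq_p2_smul, map_smul, hε, taylor_apply, smul_add, p2_smul_one_tmul,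
    p2_smul_kappa, add_assoc, ← map_add, add_comm (m ⊗ₜ _)] at h
  exact kappa_injective (add_left_cancel h.symm)

end Connection

theorem strat_comm_iff_connection_comm {N : Type u} [AddCommGroup N] [Module A N]
    {DM : M →+ M ⊗[A] Ω[A⁄R]} {DN : N →+ N ⊗[A] Ω[A⁄R]}
    {εM : InfR R A ⊗[A] M ≃ₗ[InfNbhd R A] InfNbhd R A ⊗[A] M}
    {εN : InfR R A ⊗[A] N ≃ₗ[InfNbhd R A] InfNbhd R A ⊗[A] N}
    (hM : ∀ m : M, εM ((1 : InfR R A) ⊗ₜ m) = taylor DM m)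
    (hN : ∀ n : N, εN ((1 : InfR R A) ⊗ₜ n) = taylor DN n) (f : M →ₗ[A] N) :
    (∀ x, εN (f.lTensor (InfR R A) x) = f.lTensor (InfNbhd R A) (εM x)) ↔
      ∀ m, DN (f m) = f.rTensor Ω[A⁄R] (DM m) := by
  constructor
  · intro hc m
    have h := hc ((1 : InfR R A) ⊗ₜ m)
    rw [LinearMap.lTensor_tmul, hN, hM, lTensor_taylor] at h
    exact kappa_injective (add_left_cancel h)
  · intro hc x
    refine TensorProduct.induction_on_smul_generator_tmul exists_smul_one_eq_infR ?_
      (fun p m => ?_) (fun x x' hx hx' => ?_) x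
    · rw [map_zero, map_zero, map_zero, map_zero]
    · rw [LinearMap.lTensor_smul_of_smulCommClass, map_smul, map_smul,
        LinearMap.lTensor_smul_of_smulCommClass, LinearMap.lTensor_tmul, hN, hM, lTensor_taylor,
        taylor_apply, hc]
    · rw [map_add, map_add, map_add, map_add, hx, hx']

end InfNbhd

/-- Converse to the construction of a connection from a `1`-stratification, and the
equivalence of the two notions.  Given an `R`-linear connection `∇` on an `A`-module `M`
satisfying the Leibniz rule, there is a unique `P`-linear isomorphism
`ε : P ⊗_{p₂,A} M ≅ M ⊗_{A,p₁} P` (written via the symmetry of the tensor product as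
`P ⊗_{p₁,A} M`) with `ε(1 ⊗ m) = m ⊗ 1 + ∇(m)` (under `Ω[A⁄R] = I/I² ⊆ P`); such an `ε`
automatically reduces to the identity modulo `I/I²`.  Conversely every `1`-stratification
comes from a unique connection, so the two constructions are mutually inverse; moreover an
`A`-linear map commutes with the connections if and only if it commutes with the
corresponding stratifications, so the category of `A`-modules with connection is
equivalent to the category of `A`-modules with `1`-stratification. -/
theorem stmt10 (R A : Type u) [CommRing R] [CommRing A] [Algebra R A] :
    (∀ (M : Type u) [AddCommGroup M] [Module A M] (D : M →+ M ⊗[A] Ω[A⁄R]),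
      (∀ (a : A) (m : M),
        D (a • m) = a • D m + m ⊗ₜ[A] KaehlerDifferential.D R A a) →
      ∃! ε : (InfR R A ⊗[A] M) ≃ₗ[InfNbhd R A] (InfNbhd R A ⊗[A] M),
        ∀ m : M, ε ((1 : InfR R A) ⊗ₜ[A] m) =
          (1 : InfNbhd R A) ⊗ₜ[A] m + kappa R A M (D m)) ∧
    (∀ (M : Type u) [AddCommGroup M] [Module A M]
      (ε : (InfR R A ⊗[A] M) ≃ₗ[InfNbhd R A] (InfNbhd R A ⊗[A] M)),
      (∀ m : M, ε ((1 : InfR R A) ⊗ₜ[A] m) - (1 : InfNbhd R A) ⊗ₜ[A] m ∈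
        LinearMap.range (kappa R A M)) →
      ∃! D : M →+ M ⊗[A] Ω[A⁄R],
        (∀ (a : A) (m : M),
          D (a • m) = a • D m + m ⊗ₜ[A] KaehlerDifferential.D R A a) ∧
        ∀ m : M, ε ((1 : InfR R A) ⊗ₜ[A] m) =
          (1 : InfNbhd R A) ⊗ₜ[A] m + kappa R A M (D m)) ∧
    (∀ (M N : Type u) [AddCommGroup M] [Module A M] [AddCommGroup N] [Module A N]
      (DM : M →+ M ⊗[A] Ω[A⁄R]) (DN : N →+ N ⊗[A] Ω[A⁄R])
      (εM : (InfR R A ⊗[A] M) ≃ₗ[InfNbhd R A] (InfNbhd R A ⊗[A] M))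
      (εN : (InfR R A ⊗[A] N) ≃ₗ[InfNbhd R A] (InfNbhd R A ⊗[A] N)),
      (∀ m : M, εM ((1 : InfR R A) ⊗ₜ[A] m) =
        (1 : InfNbhd R A) ⊗ₜ[A] m + kappa R A M (DM m)) →
      (∀ n : N, εN ((1 : InfR R A) ⊗ₜ[A] n) =
        (1 : InfNbhd R A) ⊗ₜ[A] n + kappa R A N (DN n)) →
      ∀ f : M →ₗ[A] N,
        ((∀ x : InfR R A ⊗[A] M,
            εN (LinearMap.lTensor (InfR R A) f x) =
              LinearMap.lTensor (InfNbhd R A) f (εM x)) ↔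
          (∀ m : M, DN (f m) = LinearMap.rTensor (Ω[A⁄R]) f (DM m)))) := by
  refine ⟨fun M _ _ D hD => ?_, fun M _ _ ε hε => ?_,
    fun M N _ _ _ _ DM DN εM εN hM hN f => InfNbhd.strat_comm_iff_connection_comm hM hN f⟩
  · exact ⟨InfNbhd.stratOfConnection hD, InfNbhd.stratOfConnection_one_tmul hD,
      fun ε hε => InfNbhd.eq_stratOfConnection hD hε⟩
  · have hD m := (InfNbhd.taylor_connectionOfStrat ε hε m).symm
    refine ⟨InfNbhd.connectionOfStrat ε, ⟨InfNbhd.leibniz_of_strat ε hD, hD⟩, fun D' hD' => ?_⟩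
    exact AddMonoidHom.ext fun m => InfNbhd.eq_of_taylor_apply_eq ((hD'.2 m).symm.trans (hD m))

end
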